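/- Let g ∈ L^∞(ℝ) be causal (g(τ)=0 for τ<0) with Laplace transform g̃(z) = ∫_0^∞ g(τ)e^{izτ}dτ on the upper half-plane. Then the map η ↦ g̃(·+iη) from (0,∞) to H^s(ℝ_ω) is continuous for all s ∈ ℝ, and for s > 1/2 it extends to a uniformly continuous map from [0,∞) to H^{-s}(ℝ_ω), with g̃(·+iη) → ĝ strongly in H^{-s}(ℝ_ω) as η → 0⁺, where ĝ is the distributional Fourier transform of g. Moreover ‖g̃(·+iη) - ĝ‖_{H^{-s}} ≤ ‖g‖_{L^∞} (2π ∫_0^∞ (1-e^{-ητ})²(1+τ²)^{-s} dτ)^{1/2}. -/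

import Mathlib

/-!
Via the Fourier isometry defining the H^s norms (‖h‖_{H^s}² = 2π∫(1+τ²)^s |(F⁻¹h)(τ)|²dτ),
g̃(·+iη) has time-side representative τ ↦ g(τ)e^{-ητ} (for a.e. τ, since g is causal)
and ĝ has representative g itself; hence all the H^s distances appearing in the
statement are the weighted L² norms `hsNorm` of the corresponding differences.
-/

open MeasureTheory Real Filter

/-- The H^s norm of a frequency-side object, computed from its time-side
representative `u = F⁻¹(·)`: `(2π ∫ (1+τ²)^s ‖u τ‖² dτ)^{1/2}`. -/
noncomputable def hsNorm (s : ℝ) (u : ℝ → ℂ) : ℝ :=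
  Real.sqrt (2 * π * ∫ τ : ℝ, (1 + τ ^ 2) ^ s * ‖u τ‖ ^ 2)

open Set Asymptotics Topology

/-!
On the time side, `g̃(·+iη₁) - g̃(·+iη₂)` is `g(τ)(e^{-η₁τ} - e^{-η₂τ})`, supported in `τ ≥ 0`
with `|g| ≤ ‖g‖_∞`, so every H^σ distance is at most `‖g‖_∞ (2π ∫_0^∞ (1+τ²)^σ r(τ)² dτ)^{1/2}`
for the scalar factor `r`. For `η, η₀` near `η₀ > 0` the mean value theorem gives
`r(τ)² ≤ (η-η₀)² τ² e^{-η₀τ}`, which beats any polynomial weight. For `η₁, η₂ ≥ 0` one only has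
`r(τ)² ≤ min((η₁-η₂)²τ², 1)`, and it is the integrability of `(1+τ²)^{-s}` for `s > 1/2` that
lets dominated convergence make the bound uniformly small.
-/

lemma hsNorm_nonneg (s : ℝ) (u : ℝ → ℂ) : 0 ≤ hsNorm s u := sqrt_nonneg _

lemma continuous_one_add_sq_rpow (s : ℝ) : Continuous fun τ : ℝ => (1 + τ ^ 2) ^ s :=
  (continuous_const.add (continuous_pow 2)).rpow_const fun τ =>
    Or.inl (by positivity : (1 : ℝ) + τ ^ 2 ≠ 0)

lemma integrable_one_add_sq_rpow_neg {s : ℝ} (hs : 1 / 2 < s) :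
    Integrable fun τ : ℝ => (1 + τ ^ 2) ^ (-s) := by
  have h := integrable_rpow_neg_one_add_norm_sq (E := ℝ) (μ := volume) (r := 2 * s)
    (by simp only [Module.finrank_self, Nat.cast_one]; linarith)
  refine h.congr (Eventually.of_forall fun τ => ?_)
  simp only [norm_eq_abs, sq_abs]
  ring_nf

lemma one_add_sq_rpow_isBigO_exp (s : ℝ) {b : ℝ} (hb : 0 < b) :
    (fun τ : ℝ => (1 + τ ^ 2) ^ s) =O[atTop] fun τ => exp (b * τ) := by
  refine IsBigO.trans ?_ (isLittleO_rpow_exp_pos_mul_atTop (2 * |s|) hb).isBigO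
  refine IsBigO.of_bound (2 ^ |s|) ?_
  filter_upwards [eventually_ge_atTop 1] with τ hτ
  have h1 : 1 ≤ 1 + τ ^ 2 := by nlinarith
  rw [norm_of_nonneg (by positivity), norm_of_nonneg (by positivity)]
  calc (1 + τ ^ 2) ^ s ≤ (1 + τ ^ 2) ^ |s| := rpow_le_rpow_of_exponent_le h1 (le_abs_self s)
    _ ≤ (2 * τ ^ 2) ^ |s| := by gcongr; nlinarith
    _ = 2 ^ |s| * τ ^ (2 * |s|) := by
      rw [mul_rpow zero_le_two (by positivity), rpow_mul (by linarith), rpow_two]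

lemma integrableOn_one_add_sq_rpow_mul_exp_neg (s : ℝ) {c : ℝ} (hc : 0 < c) :
    IntegrableOn (fun τ : ℝ => (1 + τ ^ 2) ^ s * exp (-c * τ)) (Ioi 0) := by
  refine integrable_of_isBigO_exp_neg (half_pos hc)
    ((continuous_one_add_sq_rpow s).mul (by fun_prop)).continuousOn ?_
  refine ((one_add_sq_rpow_isBigO_exp s (half_pos hc)).mul
    (isBigO_refl (fun τ => exp (-c * τ)) atTop)).congr_right fun τ => ?_
  rw [← exp_add]
  ring_nf

lemma abs_exp_neg_sub_exp_neg_le {a b m : ℝ} (ha : m ≤ a) (hb : m ≤ b) :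
    |exp (-a) - exp (-b)| ≤ |a - b| * exp (-m) := by
  wlog hab : b ≤ a generalizing a b
  · rw [abs_sub_comm, abs_sub_comm a]
    exact this hb ha (le_of_not_ge hab)
  have hsplit : exp (-a) = exp (-b) * exp (-(a - b)) := by rw [← exp_add]; ring_nf
  have hlin := one_sub_le_exp_neg (a - b)
  rw [abs_of_nonpos (sub_nonpos.2 (exp_le_exp.2 (neg_le_neg hab))),
    abs_of_nonneg (sub_nonneg.2 hab)]
  calc -(exp (-a) - exp (-b)) ≤ (a - b) * exp (-b) := by nlinarith [exp_pos (-b)]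
    _ ≤ (a - b) * exp (-m) := by gcongr

lemma tendsto_integral_min_sq_mul {μ : Measure ℝ} {w : ℝ → ℝ} (hw : Integrable w μ) :
    Tendsto (fun d : ℝ => ∫ τ, min (d ^ 2 * τ ^ 2) 1 * w τ ∂μ) (𝓝 0) (𝓝 0) := by
  have h := tendsto_integral_filter_of_dominated_convergence (l := 𝓝 (0 : ℝ)) (μ := μ)
    (F := fun d τ => min (d ^ 2 * τ ^ 2) 1 * w τ) (f := fun _ => 0) (fun τ => ‖w τ‖)
    (Eventually.of_forall fun d => (Continuous.aestronglyMeasurable (by fun_prop)).mul hw.1)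
    (Eventually.of_forall fun d => Eventually.of_forall fun τ => by
      rw [norm_mul, norm_of_nonneg (le_min (by positivity) zero_le_one)]
      exact mul_le_of_le_one_left (norm_nonneg _) (min_le_right _ _))
    hw.norm
    (Eventually.of_forall fun τ => by
      have hc : Continuous fun d : ℝ => min (d ^ 2 * τ ^ 2) 1 * w τ := by fun_prop
      simpa using hc.tendsto 0)
  simpa using h

section CausalBounded

variable {g : ℝ → ℂ} {M : ℝ}

lemma integral_weight_mul_norm_sq_le (hgM : ∀ᵐ τ, ‖g τ‖ ≤ M)
    (hcausal : ∀ᵐ τ : ℝ, τ < 0 → g τ = 0) {s : ℝ} {r F : ℝ → ℝ}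
    (hF : IntegrableOn F (Ioi 0)) (hrF : ∀ τ, 0 < τ → (1 + τ ^ 2) ^ s * r τ ^ 2 ≤ F τ) :
    ∫ τ, (1 + τ ^ 2) ^ s * ‖g τ * r τ‖ ^ 2 ≤ M ^ 2 * ∫ τ in Ioi 0, F τ := by
  rw [← integral_indicator measurableSet_Ioi, ← integral_const_mul]
  refine integral_mono_of_nonneg (Eventually.of_forall fun τ => by positivity)
    ((hF.integrable_indicator measurableSet_Ioi).const_mul _) ?_
  filter_upwards [hgM, hcausal, volume.ae_ne 0] with τ hgτ hgτ0 hτ0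
  rcases hτ0.lt_or_gt with hτ | hτ
  · rw [indicator_of_notMem (by simpa using hτ.le), hgτ0 hτ]
    simp
  · rw [indicator_of_mem (mem_Ioi.2 hτ), norm_mul, Complex.norm_real, norm_eq_abs, mul_pow, sq_abs]
    calc (1 + τ ^ 2) ^ s * (‖g τ‖ ^ 2 * r τ ^ 2) ≤ M ^ 2 * ((1 + τ ^ 2) ^ s * r τ ^ 2) := by
          rw [mul_left_comm]; gcongr
      _ ≤ M ^ 2 * F τ := by gcongr; exact hrF τ hτ

lemma hsNorm_mul_le (hgM : ∀ᵐ τ, ‖g τ‖ ≤ M) (hcausal : ∀ᵐ τ : ℝ, τ < 0 → g τ = 0)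
    {s : ℝ} {r F : ℝ → ℝ} (hF : IntegrableOn F (Ioi 0))
    (hrF : ∀ τ, 0 < τ → (1 + τ ^ 2) ^ s * r τ ^ 2 ≤ F τ) :
    hsNorm s (fun τ => g τ * r τ) ≤ M * sqrt (2 * π * ∫ τ in Ioi 0, F τ) := by
  obtain ⟨τ, hτ⟩ := hgM.exists
  have hM : 0 ≤ M := (norm_nonneg _).trans hτ
  rw [← sqrt_sq hM, ← sqrt_mul (sq_nonneg M), mul_left_comm]
  exact sqrt_le_sqrt (by gcongr; exact integral_weight_mul_norm_sq_le hgM hcausal hF hrF)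

lemma hsNorm_exp_sub_exp_le_of_half_le (hgM : ∀ᵐ τ, ‖g τ‖ ≤ M)
    (hcausal : ∀ᵐ τ : ℝ, τ < 0 → g τ = 0) (s : ℝ) {η₀ η : ℝ} (hη₀ : 0 < η₀)
    (hη : η₀ / 2 ≤ η) :
    hsNorm s (fun τ => g τ * ((exp (-η * τ) - exp (-η₀ * τ) : ℝ) : ℂ)) ≤
      |η - η₀| * (M * sqrt (2 * π * ∫ τ in Ioi 0, (1 + τ ^ 2) ^ (s + 1) * exp (-η₀ * τ))) := by
  refine (hsNorm_mul_le hgM hcausal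
    ((integrableOn_one_add_sq_rpow_mul_exp_neg (s + 1) hη₀).const_mul ((η - η₀) ^ 2))
    fun τ hτ => ?_).trans_eq ?_
  · have hdiff : |exp (-η * τ) - exp (-η₀ * τ)| ≤ |η - η₀| * τ * exp (-(η₀ / 2 * τ)) := by
      have h := abs_exp_neg_sub_exp_neg_le (a := η * τ) (b := η₀ * τ) (m := η₀ / 2 * τ)
        (by gcongr) (by gcongr; linarith)
      rw [neg_mul, neg_mul]
      rwa [← sub_mul, abs_mul, abs_of_pos hτ] at h
    have hsq : (exp (-η * τ) - exp (-η₀ * τ)) ^ 2 ≤ (η - η₀) ^ 2 * (τ ^ 2 * exp (-η₀ * τ)) := by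
      calc (exp (-η * τ) - exp (-η₀ * τ)) ^ 2 = |exp (-η * τ) - exp (-η₀ * τ)| ^ 2 :=
            (sq_abs _).symm
        _ ≤ (|η - η₀| * τ * exp (-(η₀ / 2 * τ))) ^ 2 := by gcongr
        _ = (η - η₀) ^ 2 * (τ ^ 2 * exp (-η₀ * τ)) := by
          rw [mul_pow, mul_pow, sq_abs, ← exp_nat_mul]; ring_nf
    have hw : (1 + τ ^ 2) ^ s * τ ^ 2 ≤ (1 + τ ^ 2) ^ (s + 1) := by
      rw [rpow_add_one (by positivity)]; gcongr; linarith
    calc (1 + τ ^ 2) ^ s * (exp (-η * τ) - exp (-η₀ * τ)) ^ 2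
        ≤ (η - η₀) ^ 2 * ((1 + τ ^ 2) ^ s * τ ^ 2 * exp (-η₀ * τ)) := by
          have := mul_le_mul_of_nonneg_left hsq (by positivity : 0 ≤ (1 + τ ^ 2) ^ s)
          linarith
      _ ≤ (η - η₀) ^ 2 * ((1 + τ ^ 2) ^ (s + 1) * exp (-η₀ * τ)) := by gcongr
  · rw [integral_const_mul, mul_left_comm, sqrt_mul (sq_nonneg _), sqrt_sq_eq_abs]
    ring

lemma tendsto_hsNorm_exp_sub_exp (hgM : ∀ᵐ τ, ‖g τ‖ ≤ M)
    (hcausal : ∀ᵐ τ : ℝ, τ < 0 → g τ = 0) (s : ℝ) {η₀ : ℝ} (hη₀ : 0 < η₀) :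
    Tendsto (fun η : ℝ => hsNorm s (fun τ => g τ * ((exp (-η * τ) - exp (-η₀ * τ) : ℝ) : ℂ)))
      (𝓝[Ioi 0] η₀) (𝓝 0) := by
  set K := M * sqrt (2 * π * ∫ τ in Ioi 0, (1 + τ ^ 2) ^ (s + 1) * exp (-η₀ * τ))
  have hlim : Tendsto (fun η => |η - η₀| * K) (𝓝 η₀) (𝓝 0) :=
    (by fun_prop : Continuous fun η => |η - η₀| * K).tendsto' η₀ 0 (by simp)
  refine squeeze_zero' (Eventually.of_forall fun η => hsNorm_nonneg _ _) ?_
    (hlim.mono_left nhdsWithin_le_nhds)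
  filter_upwards [nhdsWithin_le_nhds (eventually_ge_nhds (half_lt_self hη₀))] with η hη
  exact hsNorm_exp_sub_exp_le_of_half_le hgM hcausal s hη₀ hη

lemma hsNorm_exp_sub_exp_le_min (hgM : ∀ᵐ τ, ‖g τ‖ ≤ M)
    (hcausal : ∀ᵐ τ : ℝ, τ < 0 → g τ = 0) {s : ℝ} (hs : 1 / 2 < s) {η₁ η₂ : ℝ}
    (h₁ : 0 ≤ η₁) (h₂ : 0 ≤ η₂) :
    hsNorm (-s) (fun τ => g τ * ((exp (-η₁ * τ) - exp (-η₂ * τ) : ℝ) : ℂ)) ≤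
      M * sqrt (2 * π * ∫ τ in Ioi 0, min ((η₁ - η₂) ^ 2 * τ ^ 2) 1 * (1 + τ ^ 2) ^ (-s)) := by
  have hF : IntegrableOn (fun τ => min ((η₁ - η₂) ^ 2 * τ ^ 2) 1 * (1 + τ ^ 2) ^ (-s)) (Ioi 0) :=
    (integrable_one_add_sq_rpow_neg hs).integrableOn.bdd_mul (c := 1)
      (Continuous.aestronglyMeasurable (by fun_prop)) (Eventually.of_forall fun τ => by
        rw [norm_of_nonneg (le_min (by positivity) zero_le_one)]
        exact min_le_right _ _)
  refine hsNorm_mul_le hgM hcausal hF fun τ hτ => ?_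
  have hlip : |exp (-(η₁ * τ)) - exp (-(η₂ * τ))| ≤ |η₁ - η₂| * τ := by
    simpa [← sub_mul, abs_mul, abs_of_pos hτ] using
      abs_exp_neg_sub_exp_neg_le (a := η₁ * τ) (b := η₂ * τ) (m := 0) (by positivity)
        (by positivity)
  have hone : |exp (-(η₁ * τ)) - exp (-(η₂ * τ))| ≤ 1 :=
    abs_sub_le_of_nonneg_of_le (exp_nonneg _) (exp_le_one_iff.2 (neg_nonpos.2 (by positivity)))
      (exp_nonneg _) (exp_le_one_iff.2 (neg_nonpos.2 (by positivity)))
  rw [mul_comm]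
  gcongr
  rw [neg_mul, neg_mul, ← sq_abs]
  refine le_min ?_ (pow_le_one₀ (abs_nonneg _) hone)
  calc |exp (-(η₁ * τ)) - exp (-(η₂ * τ))| ^ 2 ≤ (|η₁ - η₂| * τ) ^ 2 := by gcongr
    _ = (η₁ - η₂) ^ 2 * τ ^ 2 := by rw [mul_pow, sq_abs]

lemma exists_hsNorm_exp_sub_exp_lt (hgM : ∀ᵐ τ, ‖g τ‖ ≤ M)
    (hcausal : ∀ᵐ τ : ℝ, τ < 0 → g τ = 0) {s : ℝ} (hs : 1 / 2 < s) {ε : ℝ} (hε : 0 < ε) :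
    ∃ δ : ℝ, 0 < δ ∧ ∀ η₁ η₂ : ℝ, 0 ≤ η₁ → 0 ≤ η₂ → |η₁ - η₂| < δ →
      hsNorm (-s) (fun τ => g τ * ((exp (-η₁ * τ) - exp (-η₂ * τ) : ℝ) : ℂ)) < ε := by
  have hlim : Tendsto
      (fun d => M * sqrt (2 * π * ∫ τ in Ioi 0, min (d ^ 2 * τ ^ 2) 1 * (1 + τ ^ 2) ^ (-s)))
      (𝓝 0) (𝓝 0) := by
    simpa using ((tendsto_integral_min_sq_mul
      (integrable_one_add_sq_rpow_neg hs).integrableOn).const_mul (2 * π)).sqrt.const_mul M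
  obtain ⟨δ, hδ, hball⟩ := Metric.tendsto_nhds_nhds.1 hlim ε hε
  refine ⟨δ, hδ, fun η₁ η₂ h₁ h₂ hd =>
    (hsNorm_exp_sub_exp_le_min hgM hcausal hs h₁ h₂).trans_lt ?_⟩
  have := hball (x := η₁ - η₂) (by simpa [Real.dist_eq] using hd)
  exact (le_abs_self _).trans_lt (by simpa [Real.dist_eq] using this)

lemma tendsto_hsNorm_exp_sub_one (hgM : ∀ᵐ τ, ‖g τ‖ ≤ M)
    (hcausal : ∀ᵐ τ : ℝ, τ < 0 → g τ = 0) {s : ℝ} (hs : 1 / 2 < s) :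
    Tendsto (fun η : ℝ => hsNorm (-s) (fun τ => g τ * ((exp (-η * τ) - 1 : ℝ) : ℂ)))
      (𝓝[Ioi 0] 0) (𝓝 0) := by
  rw [Metric.tendsto_nhdsWithin_nhds]
  intro ε hε
  obtain ⟨δ, hδ, hclose⟩ := exists_hsNorm_exp_sub_exp_lt hgM hcausal hs hε
  refine ⟨δ, hδ, fun η hη hdist => ?_⟩
  have := hclose η 0 (le_of_lt hη) le_rfl (by simpa [Real.dist_eq] using hdist)
  simpa [Real.dist_eq, abs_of_nonneg (hsNorm_nonneg _ _)] using this

lemma hsNorm_exp_sub_one_le (hgM : ∀ᵐ τ, ‖g τ‖ ≤ M)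
    (hcausal : ∀ᵐ τ : ℝ, τ < 0 → g τ = 0) {s : ℝ} (hs : 1 / 2 < s) {η : ℝ} (hη : 0 ≤ η) :
    hsNorm (-s) (fun τ => g τ * ((exp (-η * τ) - 1 : ℝ) : ℂ)) ≤
      M * sqrt (2 * π * ∫ τ in Ioi 0, (1 - exp (-η * τ)) ^ 2 * (1 + τ ^ 2) ^ (-s)) := by
  have hF : IntegrableOn (fun τ => (1 - exp (-η * τ)) ^ 2 * (1 + τ ^ 2) ^ (-s)) (Ioi 0) :=
    (integrable_one_add_sq_rpow_neg hs).integrableOn.bdd_mul (c := 1)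
      (Continuous.aestronglyMeasurable (by fun_prop))
      ((ae_restrict_iff' measurableSet_Ioi).2 (Eventually.of_forall fun τ (hτ : 0 < τ) => by
        have h0 := exp_pos (-η * τ)
        have h1 : exp (-η * τ) ≤ 1 := exp_le_one_iff.2 (by nlinarith)
        rw [norm_of_nonneg (sq_nonneg _)]
        nlinarith))
  exact hsNorm_mul_le hgM hcausal hF fun τ _ => le_of_eq (by ring)

end CausalBounded

theorem stmt3 (g : ℝ → ℂ) (hg : MemLp g ⊤ volume)
    (hcausal : ∀ᵐ τ : ℝ, τ < 0 → g τ = 0) :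
    -- (a) continuity from (0,∞) to H^s for every s ∈ ℝ
    (∀ s : ℝ, ∀ η₀ : ℝ, 0 < η₀ →
      Tendsto
        (fun η : ℝ => hsNorm s
          (fun τ => g τ * Complex.ofReal (Real.exp (-η * τ) - Real.exp (-η₀ * τ))))
        (nhdsWithin η₀ (Set.Ioi 0)) (nhds 0)) ∧
    -- (b) uniform continuity from [0,∞) to H^{-s} for s > 1/2
    (∀ s : ℝ, 1 / 2 < s → ∀ ε : ℝ, 0 < ε → ∃ δ : ℝ, 0 < δ ∧
      ∀ η₁ η₂ : ℝ, 0 ≤ η₁ → 0 ≤ η₂ → |η₁ - η₂| < δ →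
        hsNorm (-s)
          (fun τ => g τ * Complex.ofReal (Real.exp (-η₁ * τ) - Real.exp (-η₂ * τ))) < ε) ∧
    -- (c) strong convergence g̃(·+iη) → ĝ in H^{-s} as η → 0⁺, for s > 1/2
    (∀ s : ℝ, 1 / 2 < s →
      Tendsto
        (fun η : ℝ => hsNorm (-s) (fun τ => g τ * Complex.ofReal (Real.exp (-η * τ) - 1)))
        (nhdsWithin 0 (Set.Ioi 0)) (nhds 0)) ∧
    -- (d) the quantitative bound
    (∀ s : ℝ, 1 / 2 < s → ∀ η : ℝ, 0 ≤ η →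
      hsNorm (-s) (fun τ => g τ * Complex.ofReal (Real.exp (-η * τ) - 1))
        ≤ (eLpNorm g ⊤ volume).toReal *
            Real.sqrt (2 * π *
              ∫ τ in Set.Ioi (0 : ℝ), (1 - Real.exp (-η * τ)) ^ 2 * (1 + τ ^ 2) ^ (-s))) := by
  have hgM : ∀ᵐ τ, ‖g τ‖ ≤ (eLpNorm g ⊤ volume).toReal := by
    simpa only [toReal_eLpNorm hg.aestronglyMeasurable] using ae_le_lpNorm_exponent_top hg
  exact ⟨fun s _ hη₀ => tendsto_hsNorm_exp_sub_exp hgM hcausal s hη₀,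
    fun _ hs _ hε => exists_hsNorm_exp_sub_exp_lt hgM hcausal hs hε,
    fun _ hs => tendsto_hsNorm_exp_sub_one hgM hcausal hs,
    fun _ hs _ hη => hsNorm_exp_sub_one_le hgM hcausal hs hη⟩
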